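/- arXiv:1510.01173 — 2 statements merged into one kernel-verified Lean document; each statement's English description precedes it below -/
import Mathlib

section
/- Let κ ∈ ℝ and let ψ : ℝ × ℝ → ℂ be twice continuously differentiable in (x,t). Define the equal-space Hamiltonian density function H : ℂ⁶ → ℂ by H(u, v, uₜ, vₜ, uₓ, vₓ) = (i/2)(u vₜ − v uₜ) − vₓ uₓ + κ (u v)², the six slots treated as independent complex variables with formal partial derivatives ∂₁,…,∂₆, and let j(x,t) = (ψ, ψ̄, ψₜ, ψ̄ₜ, ψₓ, ψ̄ₓ). Then at every (x,t) the variational derivative with respect to the first slot satisfies (∂₁H)(j(x,t)) − ∂ₜ[(∂₃H)(j(x,t))] = i ψ̄ₜ + 2κ|ψ|²ψ̄. Consequently, the space-Hamilton equation ∂ₓ(−ψ̄ₓ) = −((∂₁H)(j) − ∂ₜ[(∂₃H)(j)]) holds at every (x,t) if and only if ψ̄ satisfies −i ψ̄ₜ + ψ̄ₓₓ = 2κ|ψ|²ψ̄, i.e. if and only if ψ satisfies the nonlinear Schrödinger equation i ψₜ + ψₓₓ = 2κ|ψ|²ψ. -/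
open Complex ComplexConjugate

noncomputable section

/-- Partial derivative in the first (space) variable. -/
def px (f : ℝ × ℝ → ℂ) (p : ℝ × ℝ) : ℂ := deriv (fun x => f (x, p.2)) p.1

/-- Partial derivative in the second (time) variable. -/
def pt (f : ℝ × ℝ → ℂ) (p : ℝ × ℝ) : ℂ := deriv (fun t => f (p.1, t)) p.2

/-- Formal partial derivative of a function of six complex variables with respect to slot `j`. -/
def pd (H : (Fin 6 → ℂ) → ℂ) (j : Fin 6) (v : Fin 6 → ℂ) : ℂ :=
  deriv (fun z => H (Function.update v j z)) (v j)

/-- The equal-space Hamiltonian density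
H(u, v, uₜ, vₜ, uₓ, vₓ) = (i/2)(u vₜ − v uₜ) − vₓ uₓ + κ (u v)². -/
def Ham (κ : ℝ) (z : Fin 6 → ℂ) : ℂ :=
  I / 2 * (z 0 * z 3 - z 1 * z 2) - z 5 * z 4 + (κ : ℂ) * (z 0 * z 1) ^ 2

/-- The jet j(x,t) = (ψ, ψ̄, ψₜ, ψ̄ₜ, ψₓ, ψ̄ₓ). -/
def jet (ψ : ℝ × ℝ → ℂ) (p : ℝ × ℝ) : Fin 6 → ℂ :=
  ![ψ p, conj (ψ p), pt ψ p, pt (fun q => conj (ψ q)) p,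
    px ψ p, px (fun q => conj (ψ q)) p]

/-! Only `∂₁H = (i/2) vₜ + 2κ u v²` and `∂₃H = -(i/2) v` enter, so along the jet the variational
derivative is `i ψ̄ₜ + 2κ|ψ|²ψ̄`. The space-Hamilton equation is then the complex conjugate of the
NLS equation, because conjugation commutes with partial derivatives in the real variables. -/

lemma px_conj (f : ℝ × ℝ → ℂ) : px (fun q => conj (f q)) = fun q => conj (px f q) :=
  funext fun _ => deriv.star

lemma pt_conj (f : ℝ × ℝ → ℂ) : pt (fun q => conj (f q)) = fun q => conj (pt f q) :=
  funext fun _ => deriv.star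

lemma px_neg (f : ℝ × ℝ → ℂ) (p : ℝ × ℝ) : px (fun q => -f q) p = -px f p :=
  deriv.neg

lemma pt_const_mul (c : ℂ) (f : ℝ × ℝ → ℂ) (p : ℝ × ℝ) :
    pt (fun q => c * f q) p = c * pt f p :=
  deriv_const_mul_field c

lemma pd_Ham_zero (κ : ℝ) (v : Fin 6 → ℂ) :
    pd (Ham κ) 0 v = I / 2 * v 3 + 2 * κ * v 0 * v 1 ^ 2 := by
  have h := ((((hasDerivAt_id (v 0)).mul_const (v 3)).sub_const (v 1 * v 2)).const_mul
      (I / 2)).sub_const (v 5 * v 4) |>.add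
      ((((hasDerivAt_id (v 0)).mul_const (v 1)).pow 2).const_mul (κ : ℂ))
  simp only [pd, Ham, Function.update_self, ne_eq, Fin.reduceEq, not_false_eq_true,
    Function.update_of_ne]
  exact h.deriv.trans (by simp; ring)

lemma pd_Ham_two (κ : ℝ) (v : Fin 6 → ℂ) : pd (Ham κ) 2 v = -(I / 2) * v 1 := by
  simp [pd, Ham]

lemma pd_Ham_zero_jet_sub_pt_pd_Ham_two_jet (κ : ℝ) (ψ : ℝ × ℝ → ℂ) (p : ℝ × ℝ) :
    pd (Ham κ) 0 (jet ψ p) - pt (fun q => pd (Ham κ) 2 (jet ψ q)) p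
      = I * pt (fun q => conj (ψ q)) p + 2 * (κ : ℂ) * (normSq (ψ p) : ℂ) * conj (ψ p) := by
  simp only [pd_Ham_zero, pd_Ham_two, jet, Matrix.cons_val_zero, Matrix.cons_val_one,
    Matrix.cons_val_three, Matrix.head_cons, Matrix.tail_cons, pt_const_mul]
  rw [← mul_conj]
  ring

lemma spaceHamilton_iff_conj_NLS (κ : ℝ) (ψ : ℝ × ℝ → ℂ) (p : ℝ × ℝ) :
    px (fun q => -(px (fun r => conj (ψ r)) q)) p
        = -(pd (Ham κ) 0 (jet ψ p) - pt (fun q => pd (Ham κ) 2 (jet ψ q)) p)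
      ↔ -I * pt (fun q => conj (ψ q)) p + px (px (fun q => conj (ψ q))) p
        = 2 * (κ : ℂ) * (normSq (ψ p) : ℂ) * conj (ψ p) := by
  rw [px_neg, pd_Ham_zero_jet_sub_pt_pd_Ham_two_jet]
  constructor <;> intro h <;> linear_combination -h

lemma conj_NLS_iff_NLS (κ : ℝ) (ψ : ℝ × ℝ → ℂ) (p : ℝ × ℝ) :
    -I * pt (fun q => conj (ψ q)) p + px (px (fun q => conj (ψ q))) p
        = 2 * (κ : ℂ) * (normSq (ψ p) : ℂ) * conj (ψ p)
      ↔ I * pt ψ p + px (px ψ) p = 2 * (κ : ℂ) * (normSq (ψ p) : ℂ) * ψ p := by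
  rw [← (starRingEnd ℂ).injective.eq_iff]
  simp [px_conj, pt_conj, map_ofNat]

theorem space_Hamilton_NLS_general (κ : ℝ) (ψ : ℝ × ℝ → ℂ) :
    (∀ p : ℝ × ℝ,
        pd (Ham κ) 0 (jet ψ p) - pt (fun q => pd (Ham κ) 2 (jet ψ q)) p
          = I * pt (fun q => conj (ψ q)) p
              + 2 * (κ : ℂ) * (normSq (ψ p) : ℂ) * conj (ψ p))
    ∧ ((∀ p : ℝ × ℝ,
          px (fun q => -(px (fun r => conj (ψ r)) q)) p
            = -(pd (Ham κ) 0 (jet ψ p) - pt (fun q => pd (Ham κ) 2 (jet ψ q)) p))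
        ↔ (∀ p : ℝ × ℝ,
            -I * pt (fun q => conj (ψ q)) p + px (px (fun q => conj (ψ q))) p
              = 2 * (κ : ℂ) * (normSq (ψ p) : ℂ) * conj (ψ p)))
    ∧ ((∀ p : ℝ × ℝ,
          px (fun q => -(px (fun r => conj (ψ r)) q)) p
            = -(pd (Ham κ) 0 (jet ψ p) - pt (fun q => pd (Ham κ) 2 (jet ψ q)) p))
        ↔ (∀ p : ℝ × ℝ,
            I * pt ψ p + px (px ψ) p = 2 * (κ : ℂ) * (normSq (ψ p) : ℂ) * ψ p)) :=
  ⟨pd_Ham_zero_jet_sub_pt_pd_Ham_two_jet κ ψ,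
    forall_congr' (spaceHamilton_iff_conj_NLS κ ψ),
    forall_congr' fun p => (spaceHamilton_iff_conj_NLS κ ψ p).trans (conj_NLS_iff_NLS κ ψ p)⟩

/-- The variational derivative of the equal-space Hamiltonian with respect to the first slot
equals i ψ̄ₜ + 2κ|ψ|²ψ̄; consequently the space-Hamilton equation ∂ₓ(−ψ̄ₓ) = −(δH/δψ) holds
iff ψ̄ satisfies −i ψ̄ₜ + ψ̄ₓₓ = 2κ|ψ|²ψ̄, i.e. iff ψ satisfies NLS. -/
theorem space_Hamilton_NLS (κ : ℝ) (ψ : ℝ × ℝ → ℂ) (hψ : ContDiff ℝ 2 ψ) :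
    (∀ p : ℝ × ℝ,
        pd (Ham κ) 0 (jet ψ p) - pt (fun q => pd (Ham κ) 2 (jet ψ q)) p
          = I * pt (fun q => conj (ψ q)) p
              + 2 * (κ : ℂ) * (normSq (ψ p) : ℂ) * conj (ψ p))
    ∧ ((∀ p : ℝ × ℝ,
          px (fun q => -(px (fun r => conj (ψ r)) q)) p
            = -(pd (Ham κ) 0 (jet ψ p) - pt (fun q => pd (Ham κ) 2 (jet ψ q)) p))
        ↔ (∀ p : ℝ × ℝ,
            -I * pt (fun q => conj (ψ q)) p + px (px (fun q => conj (ψ q))) p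
              = 2 * (κ : ℂ) * (normSq (ψ p) : ℂ) * conj (ψ p)))
    ∧ ((∀ p : ℝ × ℝ,
          px (fun q => -(px (fun r => conj (ψ r)) q)) p
            = -(pd (Ham κ) 0 (jet ψ p) - pt (fun q => pd (Ham κ) 2 (jet ψ q)) p))
        ↔ (∀ p : ℝ × ℝ,
            I * pt ψ p + px (px ψ) p = 2 * (κ : ℂ) * (normSq (ψ p) : ℂ) * ψ p)) :=
  space_Hamilton_NLS_general κ ψ
end
end

section
/- Let L > 0 and let U, V : ℝ × ℝ → M₂(ℂ) be continuously differentiable matrix-valued functions of (x,t) satisfying the zero-curvature condition ∂ₜU − ∂ₓV + UV − VU = 0 at every (x,t), together with the periodicity condition V(L, t) = V(−L, t) for all t. Let T : ℝ × ℝ → M₂(ℂ) be continuously differentiable with ∂ₓT(x,t) = U(x,t) T(x,t) and T(−L, t) = 1 (the identity matrix) for all t. Then the trace of the monodromy matrix, t ↦ trace T(L, t), is constant in t. -/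
open Matrix

noncomputable section

/-!
Fix `t` and write `Tₜ = ∂ₜT`. Since `∂ₓT = UT` is itself `C¹` in `t`, the mixed partials of `T`
commute, so `∂ₓTₜ = UₜT + UTₜ`. With the zero-curvature equation this shows that
`W(x) = Tₜ(x,t) - V(x,t) T(x,t) + T(x,t) V(-L,t)` solves the linear equation `∂ₓW = U W`;
as `W(-L) = 0`, `W` vanishes identically. At `x = L` periodicity of `V` turns this into
`∂ₜT(L,t) = V(L,t) T(L,t) - T(L,t) V(L,t)`, a commutator, so `trace T(L,t)` has zero derivative.
-/

open Set Filter Topology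

-- A Banach-algebra norm on matrices whose topology is definitionally the product topology.
attribute [local instance] Matrix.linftyOpNormedAddCommGroup Matrix.linftyOpNormedSpace
  Matrix.linftyOpNormedRing Matrix.linftyOpNormedAlgebra

section Calculus

variable {E : Type*} [NormedAddCommGroup E] [NormedSpace ℝ E]

theorem hasDerivAt_intervalIntegral_of_continuous_partial {F F' : ℝ × ℝ → E}
    (hF : Continuous F) (hF' : Continuous F')
    (hFt : ∀ p : ℝ × ℝ, HasDerivAt (fun t => F (p.1, t)) (F' p) p.2) (a b t₀ : ℝ) :
    HasDerivAt (fun t => ∫ s in a..b, F (s, t)) (∫ s in a..b, F' (s, t₀)) t₀ := by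
  obtain ⟨C, hC⟩ := (isCompact_uIcc.prod (isCompact_closedBall t₀ 1)).exists_bound_of_continuousOn
    hF'.continuousOn
  exact (intervalIntegral.hasDerivAt_integral_of_dominated_loc_of_deriv_le
    (Metric.ball_mem_nhds t₀ one_pos)
    (Eventually.of_forall fun _ => hF.curry_left.aestronglyMeasurable)
    (hF.curry_left.intervalIntegrable a b)
    hF'.curry_left.aestronglyMeasurable
    (Eventually.of_forall fun s hs t ht =>
      hC (s, t) ⟨uIoc_subset_uIcc hs, Metric.ball_subset_closedBall ht⟩)
    intervalIntegrable_const
    (Eventually.of_forall fun s _ t _ => hFt (s, t))).2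

theorem hasDerivAt_partial_comm [CompleteSpace E] {T Tx Tt Txt : ℝ × ℝ → E}
    (hTx : ∀ p : ℝ × ℝ, HasDerivAt (fun x => T (x, p.2)) (Tx p) p.1)
    (hTt : ∀ p : ℝ × ℝ, HasDerivAt (fun t => T (p.1, t)) (Tt p) p.2)
    (hTxt : ∀ p : ℝ × ℝ, HasDerivAt (fun t => Tx (p.1, t)) (Txt p) p.2)
    (hTx_cont : Continuous Tx) (hTxt_cont : Continuous Txt) (p : ℝ × ℝ) :
    HasDerivAt (fun x => Tt (x, p.2)) (Txt p) p.1 := by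
  obtain ⟨x₀, t₀⟩ := p
  have ftc (x t : ℝ) : T (x, t) = T (0, t) + ∫ s in 0..x, Tx (s, t) := by
    rw [intervalIntegral.integral_eq_sub_of_hasDerivAt (f := fun x => T (x, t))
      (fun s _ => hTx (s, t)) (hTx_cont.curry_left.intervalIntegrable 0 x)]
    abel
  have hTt_eq (x : ℝ) : Tt (x, t₀) = Tt (0, t₀) + ∫ s in 0..x, Txt (s, t₀) := by
    refine (hTt (x, t₀)).unique ?_
    rw [show (fun t => T (x, t)) = fun t => T (0, t) + ∫ s in 0..x, Tx (s, t) from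
      funext (ftc x)]
    exact (hTt (0, t₀)).add
      (hasDerivAt_intervalIntegral_of_continuous_partial hTx_cont hTxt_cont hTxt 0 x t₀)
  rw [show (fun x => Tt (x, t₀)) = fun x => Tt (0, t₀) + ∫ s in 0..x, Txt (s, t₀) from
    funext hTt_eq]
  have hTxt_section : Continuous fun s => Txt (s, t₀) := hTxt_cont.curry_left
  exact (intervalIntegral.integral_hasDerivAt_right (hTxt_section.intervalIntegrable 0 x₀)
    hTxt_section.stronglyMeasurable.stronglyMeasurableAtFilter
    hTxt_section.continuousAt).const_add _

end Calculus

theorem eq_zero_of_hasDerivAt_mul_left {𝔸 : Type*} [NormedRing 𝔸] [NormedSpace ℝ 𝔸]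
    {U W : ℝ → 𝔸} (hU : Continuous U) (hW : ∀ x, HasDerivAt W (U x * W x) x) {a : ℝ}
    (ha : W a = 0) : W = 0 := by
  funext b
  set I := Ioo (min a b - 1) (max a b + 1)
  obtain ⟨C, hC⟩ :=
    (isCompact_Icc (a := min a b - 1) (b := max a b + 1)).exists_bound_of_continuousOn
      hU.continuousOn
  have hlip : ∀ x ∈ I, LipschitzOnWith C.toNNReal (U x * ·) univ := fun x hx =>
    (LipschitzWith.of_dist_le' fun y z => by
      rw [dist_eq_norm, dist_eq_norm, ← mul_sub]
      exact (norm_mul_le _ _).trans (mul_le_mul_of_nonneg_right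
        (hC x (Ioo_subset_Icc_self hx)) (norm_nonneg _))).lipschitzOnWith
  have ha_mem : a ∈ I := ⟨by linarith [min_le_left a b], by linarith [le_max_left a b]⟩
  have hb_mem : b ∈ I := ⟨by linarith [min_le_right a b], by linarith [le_max_right a b]⟩
  exact ODE_solution_unique_of_mem_Ioo hlip ha_mem (fun x _ => ⟨hW x, trivial⟩)
    (fun x _ => ⟨by simp, trivial⟩) ha hb_mem

theorem timeDeriv_eq_of_zeroCurvature {𝔸 : Type*} [NormedRing 𝔸] [NormedAlgebra ℝ 𝔸]
    [CompleteSpace 𝔸] {U V T Ut Vx Tt : ℝ × ℝ → 𝔸} {a : ℝ}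
    (hU : Continuous U) (hUt : ∀ p : ℝ × ℝ, HasDerivAt (fun t => U (p.1, t)) (Ut p) p.2)
    (hUt_cont : Continuous Ut) (hVx : ∀ p : ℝ × ℝ, HasDerivAt (fun x => V (x, p.2)) (Vx p) p.1)
    (hT : Continuous T) (hTx : ∀ p : ℝ × ℝ, HasDerivAt (fun x => T (x, p.2)) (U p * T p) p.1)
    (hTt : ∀ p : ℝ × ℝ, HasDerivAt (fun t => T (p.1, t)) (Tt p) p.2) (hTt_cont : Continuous Tt)
    (hZC : ∀ p, Ut p - Vx p + (U p * V p - V p * U p) = 0) (hTa : ∀ t, T (a, t) = 1)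
    (x t : ℝ) : Tt (x, t) = V (x, t) * T (x, t) - T (x, t) * V (a, t) := by
  have hTtx : ∀ p : ℝ × ℝ, HasDerivAt (fun x => Tt (x, p.2)) (Ut p * T p + U p * Tt p) p.1 :=
    hasDerivAt_partial_comm hTx hTt (fun p => (hUt p).mul (hTt p)) (hU.mul hT)
      ((hUt_cont.mul hT).add (hU.mul hTt_cont))
  set W : ℝ → 𝔸 := fun x => Tt (x, t) - V (x, t) * T (x, t) + T (x, t) * V (a, t)
  have hW (x : ℝ) : HasDerivAt W (U (x, t) * W x) x := by
    refine (((hTtx (x, t)).sub ((hVx (x, t)).mul (hTx (x, t)))).add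
      ((hTx (x, t)).mul_const (V (a, t)))).congr_deriv ?_
    have hUt_eq : Ut (x, t) = Vx (x, t) - U (x, t) * V (x, t) + V (x, t) * U (x, t) := by
      rw [← sub_eq_zero, ← hZC (x, t)]
      abel
    simp only [W, hUt_eq]
    noncomm_ring
  have hWa : W a = 0 := by
    have hTt_a : Tt (a, t) = 0 :=
      (hTt (a, t)).unique (by simpa only [hTa] using hasDerivAt_const t (1 : 𝔸))
    simp only [W, hTt_a, hTa, one_mul, mul_one]
    abel
  have hWx : Tt (x, t) - V (x, t) * T (x, t) + T (x, t) * V (a, t) = 0 :=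
    congrFun (eq_zero_of_hasDerivAt_mul_left hU.curry_left hW hWa) x
  rw [← sub_eq_zero, ← hWx]
  abel

theorem hasDerivAt_px {f : ℝ × ℝ → ℂ} {p : ℝ × ℝ} (hf : DifferentiableAt ℝ f p) :
    HasDerivAt (fun x => f (x, p.2)) (px f p) p.1 :=
  (hf.comp p.1 (differentiableAt_id.prodMk (differentiableAt_const _))).hasDerivAt

theorem hasDerivAt_pt {f : ℝ × ℝ → ℂ} {p : ℝ × ℝ} (hf : DifferentiableAt ℝ f p) :
    HasDerivAt (fun t => f (p.1, t)) (pt f p) p.2 :=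
  (hf.comp p.2 ((differentiableAt_const _).prodMk differentiableAt_id)).hasDerivAt

theorem continuous_pt {f : ℝ × ℝ → ℂ} (hf : ContDiff ℝ 1 f) : Continuous (pt f) :=
  ((hf.continuous_fderiv one_ne_zero).clm_apply continuous_const).congr fun p =>
    ((hf.differentiable one_ne_zero p).hasFDerivAt.comp_hasDerivAt p.2
      ((hasDerivAt_const p.2 p.1).prodMk (hasDerivAt_id p.2))).deriv.symm

section Matrix

variable {m n : Type*}

def pxEntrywise (A : ℝ × ℝ → Matrix m n ℂ) (p : ℝ × ℝ) : Matrix m n ℂ :=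
  Matrix.of fun i j => px (fun q => A q i j) p

def ptEntrywise (A : ℝ × ℝ → Matrix m n ℂ) (p : ℝ × ℝ) : Matrix m n ℂ :=
  Matrix.of fun i j => pt (fun q => A q i j) p

theorem continuous_ptEntrywise {A : ℝ × ℝ → Matrix m n ℂ}
    (hA : ∀ i j, ContDiff ℝ 1 fun q => A q i j) : Continuous (ptEntrywise A) :=
  continuous_matrix fun i j => continuous_pt (hA i j)

variable [Fintype m] [Fintype n]

theorem Matrix.hasDerivAt_iff {α : Type*} [NormedAddCommGroup α] [NormedSpace ℝ α]
    {A : ℝ → Matrix m n α} {A' : Matrix m n α} {x : ℝ} :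
    HasDerivAt A A' x ↔ ∀ i j, HasDerivAt (fun y => A y i j) (A' i j) x := by
  refine hasDerivAt_iff_tendsto_slope.trans ?_
  refine tendsto_pi_nhds.trans (forall_congr' fun i => ?_)
  refine tendsto_pi_nhds.trans (forall_congr' fun j => ?_)
  exact hasDerivAt_iff_tendsto_slope.symm

theorem HasDerivAt.matrix_trace {α : Type*} [NormedAddCommGroup α] [NormedSpace ℝ α]
    {A : ℝ → Matrix n n α} {A' : Matrix n n α} {x : ℝ} (hA : HasDerivAt A A' x) :
    HasDerivAt (fun y => (A y).trace) A'.trace x :=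
  HasDerivAt.fun_sum fun i _ => Matrix.hasDerivAt_iff.1 hA i i

variable {A : ℝ × ℝ → Matrix m n ℂ}

theorem hasDerivAt_pxEntrywise (hA : ∀ i j, Differentiable ℝ fun q => A q i j) (p : ℝ × ℝ) :
    HasDerivAt (fun x => A (x, p.2)) (pxEntrywise A p) p.1 :=
  Matrix.hasDerivAt_iff.2 fun i j => hasDerivAt_px (hA i j p)

theorem hasDerivAt_ptEntrywise (hA : ∀ i j, Differentiable ℝ fun q => A q i j) (p : ℝ × ℝ) :
    HasDerivAt (fun t => A (p.1, t)) (ptEntrywise A p) p.2 :=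
  Matrix.hasDerivAt_iff.2 fun i j => hasDerivAt_pt (hA i j p)

end Matrix

theorem monodromy_trace_conserved_general (L : ℝ)
    (U V T : ℝ × ℝ → Matrix (Fin 2) (Fin 2) ℂ)
    (hU : ∀ i j, ContDiff ℝ 1 fun p => U p i j)
    (hV : ∀ i j, ContDiff ℝ 1 fun p => V p i j)
    (hT : ∀ i j, ContDiff ℝ 1 fun p => T p i j)
    (hZC : ∀ (p : ℝ × ℝ) (i j : Fin 2),
      pt (fun q => U q i j) p - px (fun q => V q i j) p
        + (U p * V p - V p * U p) i j = 0)
    (hper : ∀ t : ℝ, V (L, t) = V (-L, t))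
    (hTx : ∀ (p : ℝ × ℝ) (i j : Fin 2), px (fun q => T q i j) p = (U p * T p) i j)
    (hTinit : ∀ t : ℝ, T (-L, t) = 1) :
    ∀ t₁ t₂ : ℝ, (T (L, t₁)).trace = (T (L, t₂)).trace := by
  have hU_diff i j := (hU i j).differentiable one_ne_zero
  have hT_diff i j := (hT i j).differentiable one_ne_zero
  have hT_x (p : ℝ × ℝ) : HasDerivAt (fun x => T (x, p.2)) (U p * T p) p.1 := by
    convert hasDerivAt_pxEntrywise hT_diff p using 1
    ext i j
    exact (hTx p i j).symm
  have hZC' (p : ℝ × ℝ) : ptEntrywise U p - pxEntrywise V p + (U p * V p - V p * U p) = 0 := by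
    ext i j
    exact hZC p i j
  have hTt_L (t : ℝ) : ptEntrywise T (L, t) = V (L, t) * T (L, t) - T (L, t) * V (L, t) := by
    have := timeDeriv_eq_of_zeroCurvature (continuous_matrix fun i j => (hU i j).continuous)
      (hasDerivAt_ptEntrywise hU_diff) (continuous_ptEntrywise hU)
      (hasDerivAt_pxEntrywise fun i j => (hV i j).differentiable one_ne_zero)
      (continuous_matrix fun i j => (hT i j).continuous) hT_x
      (hasDerivAt_ptEntrywise hT_diff) (continuous_ptEntrywise hT) hZC' hTinit L t
    rwa [← hper t] at this
  have hderiv (t : ℝ) : HasDerivAt (fun t => (T (L, t)).trace) 0 t := by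
    simpa [hTt_L, Matrix.trace_mul_comm (V (L, t))] using
      (hasDerivAt_ptEntrywise hT_diff (L, t)).matrix_trace
  exact fun t₁ t₂ => is_const_of_deriv_eq_zero (fun t => (hderiv t).differentiableAt)
    (fun t => (hderiv t).deriv) t₁ t₂

/-- For a Lax pair (U, V) satisfying the zero-curvature condition with time-periodic V
at the endpoints, the trace of the monodromy matrix T(L, ·) of ∂ₓT = U T, T(−L, t) = 1,
is constant in time. -/
theorem monodromy_trace_conserved (L : ℝ) (hL : L > 0)
    (U V T : ℝ × ℝ → Matrix (Fin 2) (Fin 2) ℂ)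
    (hU : ∀ i j, ContDiff ℝ 1 fun p => U p i j)
    (hV : ∀ i j, ContDiff ℝ 1 fun p => V p i j)
    (hT : ∀ i j, ContDiff ℝ 1 fun p => T p i j)
    (hZC : ∀ (p : ℝ × ℝ) (i j : Fin 2),
      pt (fun q => U q i j) p - px (fun q => V q i j) p
        + (U p * V p - V p * U p) i j = 0)
    (hper : ∀ t : ℝ, V (L, t) = V (-L, t))
    (hTx : ∀ (p : ℝ × ℝ) (i j : Fin 2), px (fun q => T q i j) p = (U p * T p) i j)
    (hTinit : ∀ t : ℝ, T (-L, t) = 1) :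
    ∀ t₁ t₂ : ℝ, (T (L, t₁)).trace = (T (L, t₂)).trace :=
  monodromy_trace_conserved_general L U V T hU hV hT hZC hper hTx hTinit
end
end
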